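/- Let A be an n×n real matrix, let i ≠ j be indices, and suppose there exists z ∈ ker Aᵀ with z_i = 0 and z_j ≠ 0. Then ker A = F_{i,j}(A)^⊥. -/

import Mathlib

/-!
If `x` is orthogonal to `F_{i,j}(A)`, then `R_s ⬝ x = 0` for all `s ≠ i, j`. The left null
vector `z` is the row relation `∑ z_s R_s = 0`, so `∑ z_s (R_s ⬝ x) = 0`; as `z_i = 0`, only the
term `z_j (R_j ⬝ x)` survives, whence `R_j ⬝ x = 0`, and then `R_i ⬝ x = 0` from `R_i + R_j`.
-/

open Matrix

/-- `𝒜_{n,d}`: 0/1 matrices with exactly `d` ones in every row and column. -/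
def IsRegAdj (n d : ℕ) (A : Matrix (Fin n) (Fin n) ℝ) : Prop :=
  (∀ i j, A i j = 0 ∨ A i j = 1) ∧
  (∀ i, {j : Fin n | A i j = 1}.ncard = d) ∧
  (∀ j, {i : Fin n | A i j = 1}.ncard = d)

/-- A simple switching can be performed in `(i, j, k, l)`. -/
def CanSwitch {n : ℕ} (A : Matrix (Fin n) (Fin n) ℝ) (i j k l : Fin n) : Prop :=
  A i k = 1 ∧ A j l = 1 ∧ A i l = 0 ∧ A j k = 0

/-- The matrix obtained from `A` by the simple switching in `(i, j, k, l)`. -/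
def switch {n : ℕ} (A : Matrix (Fin n) (Fin n) ℝ) (i j k l : Fin n) :
    Matrix (Fin n) (Fin n) ℝ :=
  Matrix.of fun s t =>
    if (s = i ∧ t = k) ∨ (s = j ∧ t = l) then 0
    else if (s = i ∧ t = l) ∨ (s = j ∧ t = k) then 1
    else A s t

/-- `F_{i,j}(A)`: the span of the rows of `A` other than the `i`-th and the `j`-th,
together with `R_i + R_j`. -/
def rowSpanF {n : ℕ} (A : Matrix (Fin n) (Fin n) ℝ) (i j : Fin n) :
    Submodule ℝ (Fin n → ℝ) :=
  Submodule.span ℝ (insert (A i + A j) {r : Fin n → ℝ | ∃ s, s ≠ i ∧ s ≠ j ∧ r = A s})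

/-- Orthogonal complement w.r.t. the standard inner product on `ℝⁿ`. -/
def perp {n : ℕ} (F : Submodule ℝ (Fin n → ℝ)) : Submodule ℝ (Fin n → ℝ) where
  carrier := {x | ∀ v ∈ F, v ⬝ᵥ x = 0}
  zero_mem' := by intro v hv; simp
  add_mem' := by intro a b ha hb v hv; simp [dotProduct_add, ha v hv, hb v hv]
  smul_mem' := by intro c x hx v hv; simp [dotProduct_smul, hx v hv]

/-- `A` is `β`-delocalized: no level set of a nonzero null vector (of `A` or `Aᵀ`)
has more than `β` coordinates. -/
def Delocalized {n : ℕ} (β : ℝ) (A : Matrix (Fin n) (Fin n) ℝ) : Prop :=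
  ∀ x : Fin n → ℝ, x ≠ 0 →
    (x ∈ LinearMap.ker A.mulVecLin ∨ x ∈ LinearMap.ker Aᵀ.mulVecLin) →
    ∀ lam : ℝ, ({i : Fin n | x i = lam}.ncard : ℝ) ≤ β

section KerTranspose

variable {m n R : Type*} [Fintype n] [CommRing R]

theorem mem_ker_mulVecLin_iff_forall_dotProduct (A : Matrix m n R) (x : n → R) :
    x ∈ LinearMap.ker A.mulVecLin ↔ ∀ s, A s ⬝ᵥ x = 0 := by
  rw [LinearMap.mem_ker, mulVecLin_apply, funext_iff]
  rfl

theorem dotProduct_mulVec_eq_zero_of_mem_ker_transpose [Fintype m] {A : Matrix m n R}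
    {z : m → R} (hz : z ∈ LinearMap.ker Aᵀ.mulVecLin) (x : n → R) : z ⬝ᵥ (A *ᵥ x) = 0 := by
  rw [LinearMap.mem_ker, mulVecLin_apply] at hz
  rw [dotProduct_mulVec, ← mulVec_transpose, hz, zero_dotProduct]

theorem mulVec_apply_eq_zero_of_mem_ker_transpose [Fintype m] [NoZeroDivisors R]
    {A : Matrix m n R} {z : m → R} (hz : z ∈ LinearMap.ker Aᵀ.mulVecLin) {j : m}
    (hzj : z j ≠ 0) {x : n → R} (h : ∀ s, s ≠ j → z s * (A *ᵥ x) s = 0) :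
    (A *ᵥ x) j = 0 := by
  have hsingle : z ⬝ᵥ (A *ᵥ x) = z j * (A *ᵥ x) j :=
    Finset.sum_eq_single j (fun s _ hsj => h s hsj) (fun hj => absurd (Finset.mem_univ j) hj)
  rw [dotProduct_mulVec_eq_zero_of_mem_ker_transpose hz, eq_comm] at hsingle
  exact (mul_eq_zero.mp hsingle).resolve_left hzj

end KerTranspose

theorem mem_perp_span_iff {n : ℕ} (S : Set (Fin n → ℝ)) (x : Fin n → ℝ) :
    x ∈ perp (Submodule.span ℝ S) ↔ ∀ v ∈ S, v ⬝ᵥ x = 0 := by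
  refine ⟨fun hx v hv => hx v (Submodule.subset_span hv), fun hS v hv => ?_⟩
  induction hv using Submodule.span_induction with
  | mem v hv => exact hS v hv
  | zero => exact zero_dotProduct x
  | add a b _ _ ha hb => rw [add_dotProduct, ha, hb, add_zero]
  | smul c a _ ha => rw [smul_dotProduct, ha, smul_zero]

theorem mem_perp_rowSpanF_iff {n : ℕ} (A : Matrix (Fin n) (Fin n) ℝ) (i j : Fin n)
    (x : Fin n → ℝ) :
    x ∈ perp (rowSpanF A i j) ↔
      A i ⬝ᵥ x + A j ⬝ᵥ x = 0 ∧ ∀ s, s ≠ i → s ≠ j → A s ⬝ᵥ x = 0 := by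
  rw [rowSpanF, mem_perp_span_iff, Set.forall_mem_insert, add_dotProduct]
  refine and_congr_right fun _ => ⟨fun h s hsi hsj => h _ ⟨s, hsi, hsj, rfl⟩, ?_⟩
  rintro h _ ⟨s, hsi, hsj, rfl⟩
  exact h s hsi hsj

theorem stmt_16_general (n : ℕ) (A : Matrix (Fin n) (Fin n) ℝ) (i j : Fin n)
    (z : Fin n → ℝ) (hz : z ∈ LinearMap.ker Aᵀ.mulVecLin) (hzi : z i = 0)
    (hzj : z j ≠ 0) :
    LinearMap.ker A.mulVecLin = perp (rowSpanF A i j) := by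
  ext x
  rw [mem_perp_rowSpanF_iff, mem_ker_mulVecLin_iff_forall_dotProduct]
  refine ⟨fun h => ⟨by rw [h i, h j, add_zero], fun s _ _ => h s⟩, ?_⟩
  rintro ⟨hsum, hrest⟩
  have hj : A j ⬝ᵥ x = 0 := mulVec_apply_eq_zero_of_mem_ker_transpose hz hzj fun s hsj => by
    by_cases hsi : s = i
    · rw [hsi, hzi, zero_mul]
    · exact mul_eq_zero_of_right _ (hrest s hsi hsj)
  have hi : A i ⬝ᵥ x = 0 := by rwa [hj, add_zero] at hsum
  intro s
  by_cases hsi : s = i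
  · rwa [hsi]
  by_cases hsj : s = j
  · rwa [hsj]
  exact hrest s hsi hsj

/-- if some `z ∈ ker Aᵀ` has `z_i = 0` and `z_j ≠ 0`, then
`ker A = F_{i,j}(A)^⊥`. -/
theorem stmt_16 (n : ℕ) (A : Matrix (Fin n) (Fin n) ℝ) (i j : Fin n) (hij : i ≠ j)
    (z : Fin n → ℝ) (hz : z ∈ LinearMap.ker Aᵀ.mulVecLin) (hzi : z i = 0)
    (hzj : z j ≠ 0) :
    LinearMap.ker A.mulVecLin = perp (rowSpanF A i j) :=
  stmt_16_general n A i j z hz hzi hzj
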